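/- Let (M,d) be an ultrametric space and let A, B be nonempty spherically complete subsets of M such that δ(B) ≤ dist(A,B). Then A₀ and B₀ are nonempty spherically complete subsets of M. -/

import Mathlib

/-! Since `δ(B) ≤ dist(A,B)`, the strong triangle inequality makes `d(a, b)` independent of
`b ∈ B` for each `a ∈ A`. Hence `B₀ = B` as soon as `A₀` is nonempty, and
`A₀ = A ∩ B̄(b₀, dist(A,B))` for any `b₀ ∈ B`. A spherically complete subset of an
ultrametric space is proximinal, which provides a point of `A` at distance `dist(A,B)`
from `b₀`, and its trace on a closed ball is again spherically complete. -/

open Metric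

variable {M : Type*} [MetricSpace M]

/-- A subset `A` of a metric space is *spherically complete* (as a subspace) if every nested
decreasing sequence of closed balls of the subspace `A` has nonempty intersection. -/
def SphericallyCompleteSet (A : Set M) : Prop :=
  ∀ (c : ℕ → M) (r : ℕ → ℝ), (∀ n, c n ∈ A) → (∀ n, 0 ≤ r n) →
    (∀ n, A ∩ closedBall (c (n + 1)) (r (n + 1)) ⊆ A ∩ closedBall (c n) (r n)) →
    (A ∩ ⋂ n, closedBall (c n) (r n)).Nonempty

/-- A metric space is *spherically complete* if every nested decreasing sequence of closed
balls has nonempty intersection. -/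
def SphericallyCompleteSpace (M : Type*) [MetricSpace M] : Prop :=
  ∀ (c : ℕ → M) (r : ℕ → ℝ), (∀ n, 0 ≤ r n) →
    (∀ n, closedBall (c (n + 1)) (r (n + 1)) ⊆ closedBall (c n) (r n)) →
    (⋂ n, closedBall (c n) (r n)).Nonempty

/-- `dist(A, B) = inf {d(a,b) : a ∈ A, b ∈ B}`. -/
noncomputable def setDist (A B : Set M) : ℝ :=
  sInf {t : ℝ | ∃ a ∈ A, ∃ b ∈ B, dist a b = t}

/-- A subset `A` is *proximinal* if every point of `M` has a best approximation in `A`. -/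
def IsProximinal (A : Set M) : Prop :=
  ∀ x : M, ∃ a ∈ A, dist x a = infDist x A

/-- `A₀ = {x ∈ A : d(x,y) = dist(A,B) for some y ∈ B}`. -/
noncomputable def proxA (A B : Set M) : Set M :=
  {x ∈ A | ∃ y ∈ B, dist x y = setDist A B}

/-- `B₀ = {y ∈ B : d(x,y) = dist(A,B) for some x ∈ A}`. -/
noncomputable def proxB (A B : Set M) : Set M :=
  {y ∈ B | ∃ x ∈ A, dist x y = setDist A B}

/-- The closed ball `B(c,r)`, `r > 0`, is a *minimal `F`-invariant ball* if `F(B) ⊆ B`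
and `d(y, F(y)) = r` for each `y ∈ B`. -/
def IsMinimalInvariantBall (F : M → M) (c : M) (r : ℝ) : Prop :=
  0 < r ∧ Set.MapsTo F (closedBall c r) (closedBall c r) ∧
    ∀ y ∈ closedBall c r, dist y (F y) = r

theorem setDist_le_dist {A B : Set M} {a b : M} (ha : a ∈ A) (hb : b ∈ B) :
    setDist A B ≤ dist a b :=
  csInf_le ⟨0, by rintro t ⟨a, -, b, -, rfl⟩; exact dist_nonneg⟩ ⟨a, ha, b, hb, rfl⟩

theorem le_setDist {A B : Set M} {r : ℝ} (hA : A.Nonempty) (hB : B.Nonempty)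
    (h : ∀ a ∈ A, ∀ b ∈ B, r ≤ dist a b) : r ≤ setDist A B := by
  obtain ⟨a, ha⟩ := hA
  obtain ⟨b, hb⟩ := hB
  refine le_csInf ⟨dist a b, a, ha, b, hb, rfl⟩ ?_
  rintro t ⟨a, ha, b, hb, rfl⟩
  exact h a ha b hb

open Filter Topology

section Ultrametric

variable [IsUltrametricDist M]

namespace IsUltrametricDist

theorem dist_eq_of_dist_le_of_dist_le {a b b' : M} (hb : dist b b' ≤ dist a b)
    (hb' : dist b b' ≤ dist a b') : dist a b = dist a b' := by
  refine le_antisymm ?_ ?_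
  · exact (dist_triangle_max a b' b).trans (max_le le_rfl (dist_comm b' b ▸ hb'))
  · exact (dist_triangle_max a b b').trans (max_le le_rfl hb)

theorem closedBall_subset_closedBall_of_mem {x y : M} {r s : ℝ} (hy : y ∈ closedBall x r)
    (hsr : s ≤ r) : closedBall y s ⊆ closedBall x r :=
  closedBall_eq_of_mem hy ▸ closedBall_subset_closedBall hsr

theorem closedBall_inter_closedBall_of_mem {x y : M} {r s : ℝ} (hy : y ∈ closedBall x r) :
    closedBall x r ∩ closedBall y s = closedBall y (min s r) := by
  ext z
  rw [closedBall_eq_of_mem hy, Set.inter_comm]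
  simp only [Set.mem_inter_iff, mem_closedBall, le_min_iff]

end IsUltrametricDist

namespace SphericallyCompleteSet

variable {A : Set M}

theorem isProximinal (hA : SphericallyCompleteSet A) (hne : A.Nonempty) : IsProximinal A := by
  intro x
  set r : ℕ → ℝ := fun n => infDist x A + 1 / ((n : ℝ) + 1)
  have hr_succ : ∀ n, r (n + 1) ≤ r n := fun n => by
    simp only [r, Nat.cast_succ, add_le_add_iff_left]
    gcongr
    linarith
  have hr_tendsto : Tendsto r atTop (𝓝 (infDist x A)) := by
    have h := (tendsto_const_nhds (x := infDist x A)).add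
      (tendsto_one_div_add_atTop_nhds_zero_nat (𝕜 := ℝ))
    rwa [add_zero] at h
  have hc : ∀ n, ∃ c ∈ A, dist x c < r n := fun n =>
    (infDist_lt_iff hne).1 (lt_add_of_pos_right _ (by positivity))
  choose c hcA hc using hc
  have hnest : ∀ n, closedBall (c (n + 1)) (r (n + 1)) ⊆ closedBall (c n) (r n) := fun n => by
    refine IsUltrametricDist.closedBall_subset_closedBall_of_mem ?_ (hr_succ n)
    rw [mem_closedBall]
    exact (dist_triangle_max _ x _).trans
      (max_le (dist_comm x (c (n + 1)) ▸ (hc (n + 1)).le.trans (hr_succ n)) (hc n).le)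
  obtain ⟨a, haA, ha⟩ := hA c r hcA (fun n => dist_nonneg.trans (hc n).le)
    (fun n => Set.inter_subset_inter_right A (hnest n))
  rw [Set.mem_iInter] at ha
  refine ⟨a, haA, le_antisymm (ge_of_tendsto' hr_tendsto fun n => ?_)
    (infDist_le_dist_of_mem haA)⟩
  exact (dist_triangle_max x (c n) a).trans (max_le (hc n).le (dist_comm a (c n) ▸ ha n))

theorem inter_closedBall (hA : SphericallyCompleteSet A) (z : M) (R : ℝ) :
    SphericallyCompleteSet (A ∩ closedBall z R) := by
  intro c r hc hr hnest
  have hball : ∀ n, A ∩ closedBall z R ∩ closedBall (c n) (r n) =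
      A ∩ closedBall (c n) (min (r n) R) := fun n => by
    rw [Set.inter_assoc, IsUltrametricDist.closedBall_inter_closedBall_of_mem (hc n).2]
  obtain ⟨y, hyA, hy⟩ := hA c (fun n => min (r n) R) (fun n => (hc n).1)
    (fun n => le_min (hr n) (dist_nonneg.trans (hc n).2))
    (fun n => by simpa only [hball] using hnest n)
  rw [Set.mem_iInter] at hy
  have hyz : y ∈ closedBall z R :=
    IsUltrametricDist.closedBall_subset_closedBall_of_mem (hc 0).2 (min_le_right _ _) (hy 0)
  exact ⟨y, ⟨hyA, hyz⟩,
    Set.mem_iInter.2 fun n => closedBall_subset_closedBall (min_le_left _ _) (hy n)⟩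

end SphericallyCompleteSet

section Proximity

variable {A B : Set M}

theorem dist_eq_dist_of_diam_le_setDist (hδ : ∀ x ∈ B, ∀ y ∈ B, dist x y ≤ setDist A B)
    {a b b' : M} (ha : a ∈ A) (hb : b ∈ B) (hb' : b' ∈ B) : dist a b = dist a b' :=
  IsUltrametricDist.dist_eq_of_dist_le_of_dist_le
    ((hδ b hb b' hb').trans (setDist_le_dist ha hb))
    ((hδ b hb b' hb').trans (setDist_le_dist ha hb'))

theorem proxA_eq_inter_closedBall (hδ : ∀ x ∈ B, ∀ y ∈ B, dist x y ≤ setDist A B) {b₀ : M}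
    (hb₀ : b₀ ∈ B) : proxA A B = A ∩ closedBall b₀ (setDist A B) := by
  ext x
  constructor
  · rintro ⟨hx, y, hy, hxy⟩
    exact ⟨hx, by rw [mem_closedBall, dist_eq_dist_of_diam_le_setDist hδ hx hb₀ hy, hxy]⟩
  · rintro ⟨hx, hxb₀⟩
    exact ⟨hx, b₀, hb₀, le_antisymm hxb₀ (setDist_le_dist hx hb₀)⟩

theorem proxB_eq_self (hδ : ∀ x ∈ B, ∀ y ∈ B, dist x y ≤ setDist A B)
    (hA₀ : (proxA A B).Nonempty) : proxB A B = B := by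
  obtain ⟨a, ha, y, hy, hay⟩ := hA₀
  refine Set.Subset.antisymm (fun _ hb => hb.1) fun b hb => ⟨hb, a, ha, ?_⟩
  rw [dist_eq_dist_of_diam_le_setDist hδ ha hb hy, hay]

theorem proxA_nonempty (hδ : ∀ x ∈ B, ∀ y ∈ B, dist x y ≤ setDist A B)
    (hAsc : SphericallyCompleteSet A) (hA : A.Nonempty) (hB : B.Nonempty) :
    (proxA A B).Nonempty := by
  obtain ⟨b₀, hb₀⟩ := hB
  obtain ⟨a, ha, hdist⟩ := hAsc.isProximinal hA b₀
  rw [proxA_eq_inter_closedBall hδ hb₀]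
  refine ⟨a, ha, ?_⟩
  rw [mem_closedBall, dist_comm, hdist]
  refine le_setDist hA ⟨b₀, hb₀⟩ fun a' ha' b hb => ?_
  rw [← dist_eq_dist_of_diam_le_setDist hδ ha' hb₀ hb, dist_comm]
  exact infDist_le_dist_of_mem ha'

end Proximity

end Ultrametric

/-- **Corollary 2.7.** If `A` and `B` are nonempty spherically complete subsets of an
ultrametric space and `δ(B) ≤ dist(A,B)`, then `A₀` and `B₀` are nonempty and
spherically complete. -/
theorem proxPair_sphericallyComplete {M : Type*} [MetricSpace M] [IsUltrametricDist M]
    (A B : Set M) (hA : A.Nonempty) (hB : B.Nonempty)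
    (hAsc : SphericallyCompleteSet A) (hBsc : SphericallyCompleteSet B)
    (hδ : ∀ x ∈ B, ∀ y ∈ B, dist x y ≤ setDist A B) :
    (proxA A B).Nonempty ∧ (proxB A B).Nonempty ∧
      SphericallyCompleteSet (proxA A B) ∧ SphericallyCompleteSet (proxB A B) := by
  have hA₀ := proxA_nonempty hδ hAsc hA hB
  obtain ⟨b₀, hb₀⟩ := hB
  rw [proxB_eq_self hδ hA₀]
  refine ⟨hA₀, ⟨b₀, hb₀⟩, ?_, hBsc⟩
  rw [proxA_eq_inter_closedBall hδ hb₀]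
  exact hAsc.inter_closedBall b₀ _
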